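/- Let m ≥ 2 be even, n ≥ 1, X ≥ 1, d = m(n-1)+2X-1. Every sum φ_j + γ_{j'} with j ∈ {X+1,...,X+m}, j' ∈ {X+1,...,X+n} (bottom-right quadrant of the pole number table) is at least mn + 4X - 3, while every other sum φ_j + γ_{j'} (i.e., with j ≤ X or j' ≤ X) is at most mn + 4X - 4. -/

import Mathlib

/-!
The smallest quadrant sum is `d + (m + 2X - 2) = mn + 4X - 3`. Outside the quadrant one
index lies in the common initial block `0, 2, …, 2X - 2`, so a sum is at most
`(2X - 2) + (mn + 2X - 2)` or `(d + m - 1) + (2X - 2)`, both equal to `mn + 4X - 4`.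
-/

/-- The `j`-th entry of `φ = (0, 2, …, 2X-2, d, d+1, …, d+m-1)` for `1 ≤ j ≤ m + X`. -/
def phiEntry (X d j : ℕ) : ℕ := if j ≤ X then 2 * (j - 1) else d + (j - X - 1)

/-- The `j'`-th entry of `γ = (0, 2, …, 2X-2, m+2X-2, 2m+2X-2, …, mn+2X-2)`
for `1 ≤ j' ≤ n + X`. -/
def gammaEntry (m X j : ℕ) : ℕ := if j ≤ X then 2 * (j - 1) else (j - X) * m + 2 * X - 2

section Bounds

variable {m n X d j : ℕ}

theorem phiEntry_le_of_le (h : j ≤ X) : phiEntry X d j ≤ 2 * X - 2 := by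
  rw [phiEntry, if_pos h]
  omega

theorem le_phiEntry_of_lt (h : X < j) : d ≤ phiEntry X d j := by
  rw [phiEntry, if_neg h.not_ge]
  exact Nat.le_add_right d _

theorem phiEntry_le_of_lt (h : X < j) (hj : j ≤ m + X) : phiEntry X d j ≤ d + m - 1 := by
  rw [phiEntry, if_neg h.not_ge]
  omega

theorem gammaEntry_le_of_le (h : j ≤ X) : gammaEntry m X j ≤ 2 * X - 2 := by
  rw [gammaEntry, if_pos h]
  omega

theorem le_gammaEntry_of_lt (h : X < j) : m + 2 * X - 2 ≤ gammaEntry m X j := by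
  rw [gammaEntry, if_neg h.not_ge]
  have : m ≤ (j - X) * m := Nat.le_mul_of_pos_left m (Nat.sub_pos_of_lt h)
  omega

theorem gammaEntry_le (hj : j ≤ n + X) : gammaEntry m X j ≤ m * n + 2 * X - 2 := by
  unfold gammaEntry
  split_ifs with h
  · omega
  · have : (j - X) * m ≤ m * n := by
      rw [mul_comm]
      exact Nat.mul_le_mul_left m (by omega)
    omega

end Bounds

theorem pole_number_table_quadrants_general (m n X : ℕ)
    (hn : 1 ≤ n) (d : ℕ) (hd : d = m * (n - 1) + 2 * X - 1) :
    ∀ j j' : ℕ, 1 ≤ j → j ≤ m + X → 1 ≤ j' → j' ≤ n + X →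
      ((X < j ∧ X < j') → m * n + 4 * X - 3 ≤ phiEntry X d j + gammaEntry m X j') ∧
      ((j ≤ X ∨ j' ≤ X) → phiEntry X d j + gammaEntry m X j' ≤ m * n + 4 * X - 4) := by
  intro j j' hj hjm hj' hjn
  have hmn : m * (n - 1) + m = m * n := by
    rw [Nat.mul_sub_one, Nat.sub_add_cancel (Nat.le_mul_of_pos_right m hn)]
  refine ⟨fun ⟨hjX, hj'X⟩ => ?_, fun h => ?_⟩
  · have hφ := le_phiEntry_of_lt (d := d) hjX
    have hγ := le_gammaEntry_of_lt (m := m) hj'X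
    omega
  · rcases le_or_gt j X with hjX | hjX
    · have hφ := phiEntry_le_of_le (d := d) hjX
      have hγ := gammaEntry_le (m := m) hjn
      omega
    · have hj'X : j' ≤ X := h.resolve_left hjX.not_ge
      have hφ := phiEntry_le_of_lt (d := d) hjX hjm
      have hγ := gammaEntry_le_of_le (m := m) hj'X
      omega

/-- Every sum in the bottom-right quadrant of the pole number table is at least
`mn + 4X - 3`, while every other sum is at most `mn + 4X - 4`. -/
theorem pole_number_table_quadrants (m n X : ℕ) (hm : 2 ≤ m) (hme : Even m)
    (hn : 1 ≤ n) (hX : 1 ≤ X) (d : ℕ) (hd : d = m * (n - 1) + 2 * X - 1) :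
    ∀ j j' : ℕ, 1 ≤ j → j ≤ m + X → 1 ≤ j' → j' ≤ n + X →
      ((X < j ∧ X < j') → m * n + 4 * X - 3 ≤ phiEntry X d j + gammaEntry m X j') ∧
      ((j ≤ X ∨ j' ≤ X) → phiEntry X d j + gammaEntry m X j' ≤ m * n + 4 * X - 4) :=
  pole_number_table_quadrants_general m n X hn d hd
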